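/- For n ≥ m(m-1)/2, the superpartition Λ_min = (m-1, m-2, ..., 1, 0; 1^{n̂}) with n̂ = n - m(m-1)/2 is the unique minimum of the set of superpartitions of degree (n|m) under the dominance order: every superpartition Λ of degree (n|m) satisfies Λ ≥ Λ_min. -/

import Mathlib

/-- A function `ℕ → ℕ` represents a partition: non-increasing and eventually zero. -/
def IsPartitionFn (f : ℕ → ℕ) : Prop :=
  (∀ ⦃i j : ℕ⦄, i ≤ j → f j ≤ f i) ∧ ∃ N, ∀ i, N ≤ i → f i = 0

/-- A superpartition of fermionic degree `m`: a strictly decreasing sequence `a` of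
`m` nonnegative integers together with an ordinary partition `s` (a non-increasing
list of positive integers). -/
structure SuperPartition (m : ℕ) where
  a : Fin m → ℕ
  a_strictAnti : ∀ ⦃i j : Fin m⦄, i < j → a j < a i
  s : List ℕ
  s_sorted : s.Pairwise (· ≥ ·)
  s_pos : ∀ x ∈ s, 0 < x

/-- Sort a finite multiset of naturals into the non-increasing function it defines. -/
def sortFn (ms : Multiset ℕ) : ℕ → ℕ := fun i => (ms.sort (· ≥ ·)).getD i 0

/-- `Λ* = sort(Λᵃ ∪ Λˢ)`. -/
def SuperPartition.starFn {m : ℕ} (Λ : SuperPartition m) : ℕ → ℕ :=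
  sortFn ((List.ofFn Λ.a : Multiset ℕ) + (Λ.s : Multiset ℕ))

/-- `Λ^⊛ = sort((Λᵃ + 1ᵐ) ∪ Λˢ)`. -/
def SuperPartition.circFn {m : ℕ} (Λ : SuperPartition m) : ℕ → ℕ :=
  sortFn ((List.ofFn (fun i => Λ.a i + 1) : Multiset ℕ) + (Λ.s : Multiset ℕ))

/-- The bosonic degree `|Λ|` of a superpartition. -/
def SuperPartition.deg {m : ℕ} (Λ : SuperPartition m) : ℕ :=
  (∑ i, Λ.a i) + Λ.s.sum

/-- `f` dominates `g`: all partial sums of `f` are at least those of `g`. -/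
def Dominates (f g : ℕ → ℕ) : Prop :=
  ∀ k, ∑ i ∈ Finset.range k, g i ≤ ∑ i ∈ Finset.range k, f i

/-- Dominance order on superpartitions: `Λ ≥ Ω` iff they have the same degrees and
`Λ* ≥ Ω*`, `Λ^⊛ ≥ Ω^⊛` in dominance order. -/
def SuperDom {m : ℕ} (Λ Ω : SuperPartition m) : Prop :=
  Λ.deg = Ω.deg ∧ Dominates Λ.starFn Ω.starFn ∧ Dominates Λ.circFn Ω.circFn

/-- The superpartition `Λ_min = (m-1, m-2, …, 1, 0 ; 1^nh)`. -/
def LambdaMin (m nh : ℕ) : SuperPartition m where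
  a := fun i => m - 1 - (i : ℕ)
  a_strictAnti := by
    intro i j h
    have hj : (j : ℕ) < m := j.isLt
    have h' : (i : ℕ) < (j : ℕ) := h
    show m - 1 - (j : ℕ) < m - 1 - (i : ℕ)
    omega
  s := List.replicate nh 1
  s_sorted := List.pairwise_replicate.mpr (by simp)
  s_pos := by
    intro x hx
    have := List.eq_of_mem_replicate hx
    omega


/-!
The fermionic parts of a superpartition are distinct, so `Λᵃᵢ ≥ m - 1 - i`; hence
`Λ*ᵢ ≥ m - 1 - i` and `Λ^⊛ᵢ ≥ m - i`, and `Λ*`, `Λ^⊛` are partitions whose sizes depend only on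
`n` and `m`. Among partitions of a given size lying above the staircase `c - i`, the least in
dominance order is the staircase completed by a column of ones: as long as a partition has a
nonzero part beyond row `k`, its first `k` parts are at least `max (c - i) 1`. These least
partitions are `Λ_min*` and `Λ_min^⊛`. For uniqueness, a minimum `Ω` has `Ω^⊛ = Λ_min^⊛` by
antisymmetry; then `Ωᵃ₀ + 1 ≤ Ω^⊛₀ = m` forces `Ωᵃ` to be the staircase, and `Ωˢ` is what
remains of the multiset `Ω^⊛`.
-/
open Finset

namespace List

theorem le_getD_iff_lt_countP {l : List ℕ} (hl : l.Pairwise (· ≥ ·)) {v : ℕ} (hv : 0 < v)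
    (i : ℕ) : v ≤ l.getD i 0 ↔ i < l.countP (v ≤ ·) := by
  induction l generalizing i with
  | nil => simp; omega
  | cons a t ih =>
    obtain ⟨ha, ht⟩ := pairwise_cons.1 hl
    by_cases hva : v ≤ a
    · cases i with
      | zero => simp [hva]
      | succ i => rw [getD_cons_succ, ih ht, countP_cons]; simp [hva]
    · have h0 : t.countP (v ≤ ·) = 0 :=
        countP_eq_zero.2 fun x hx => by have := ha x hx; simp; omega
      cases i with
      | zero => simp [hva, h0]
      | succ i => rw [getD_cons_succ, ih ht, countP_cons, h0]; simp [hva]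

theorem sum_range_getD (l : List ℕ) (k : ℕ) :
    ∑ i ∈ Finset.range k, l.getD i 0 = (l.take k).sum := by
  induction l generalizing k with
  | nil => simp
  | cons a t ih =>
    cases k with
    | zero => simp
    | succ k => rw [Finset.sum_range_succ', take_succ_cons, sum_cons, ← ih]; simp [add_comm]

theorem eq_of_getD_eq_of_zero_notMem {l₁ l₂ : List ℕ} (h₁ : 0 ∉ l₁) (h₂ : 0 ∉ l₂)
    (h : ∀ i, l₁.getD i 0 = l₂.getD i 0) : l₁ = l₂ := by
  induction l₁ generalizing l₂ with
  | nil =>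
    cases l₂ with
    | nil => rfl
    | cons b u => have := h 0; simp_all
  | cons a t ih =>
    cases l₂ with
    | nil => have := h 0; simp_all
    | cons b u =>
      simp only [mem_cons, not_or] at h₁ h₂
      rw [show a = b from h 0, ih h₁.2 h₂.2 fun i => h (i + 1)]

end List

section SortFn

variable {M M' : Multiset ℕ}

theorem le_sortFn_iff {v : ℕ} (hv : 0 < v) (i : ℕ) :
    v ≤ sortFn M i ↔ i < M.countP (v ≤ ·) := by
  rw [sortFn, List.le_getD_iff_lt_countP (Multiset.pairwise_sort _ _) hv,
    ← Multiset.coe_countP, Multiset.sort_eq]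

theorem sortFn_antitone (M : Multiset ℕ) : Antitone (sortFn M) := by
  intro i j hij
  obtain h0 | hpos := Nat.eq_zero_or_pos (sortFn M j)
  · simp [h0]
  · exact (le_sortFn_iff hpos i).2 (hij.trans_lt ((le_sortFn_iff hpos j).1 le_rfl))

theorem sortFn_mono (h : M ≤ M') (i : ℕ) : sortFn M i ≤ sortFn M' i := by
  obtain h0 | hpos := Nat.eq_zero_or_pos (sortFn M i)
  · simp [h0]
  · exact (le_sortFn_iff hpos i).2
      (((le_sortFn_iff hpos i).1 le_rfl).trans_le (Multiset.countP_le_of_le _ h))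

theorem le_sortFn_zero_of_mem {x : ℕ} (hx : x ∈ M) : x ≤ sortFn M 0 := by
  obtain rfl | hpos := Nat.eq_zero_or_pos x
  · exact Nat.zero_le _
  · exact (le_sortFn_iff hpos 0).2 (Multiset.countP_pos.2 ⟨x, hx, by simp⟩)

theorem sortFn_eq_of_countP_eq (h : ∀ v, 0 < v → M.countP (v ≤ ·) = M'.countP (v ≤ ·)) :
    sortFn M = sortFn M' := by
  have key (i v : ℕ) (hv : 0 < v) : v ≤ sortFn M i ↔ v ≤ sortFn M' i := by
    rw [le_sortFn_iff hv, le_sortFn_iff hv, h v hv]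
  funext i
  apply le_antisymm
  · obtain h0 | hpos := Nat.eq_zero_or_pos (sortFn M i)
    · omega
    · exact (key i _ hpos).1 le_rfl
  · obtain h0 | hpos := Nat.eq_zero_or_pos (sortFn M' i)
    · omega
    · exact (key i _ hpos).2 le_rfl

theorem sortFn_zero_cons (M : Multiset ℕ) : sortFn (0 ::ₘ M) = sortFn M :=
  sortFn_eq_of_countP_eq fun v hv => Multiset.countP_cons_of_neg _ (by simp; omega)

theorem sortFn_coe_of_pairwise {l : List ℕ} (hl : l.Pairwise (· ≥ ·)) :
    sortFn l = (l.getD · 0) := by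
  funext i
  rw [sortFn, Multiset.coe_sort, List.mergeSort_eq_self (r := fun a b : ℕ => a ≥ b) hl]

theorem sum_range_sortFn_le (M : Multiset ℕ) (k : ℕ) : ∑ i ∈ range k, sortFn M i ≤ M.sum := by
  simp only [sortFn, List.sum_range_getD]
  calc ((M.sort (· ≥ ·)).take k).sum ≤ (M.sort (· ≥ ·)).sum :=
        (List.take_sublist _ _).sum_le_sum fun _ _ => Nat.zero_le _
    _ = M.sum := by rw [← Multiset.sum_coe, Multiset.sort_eq]

theorem sum_range_sortFn_of_card_le {k : ℕ} (hk : M.card ≤ k) :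
    ∑ i ∈ range k, sortFn M i = M.sum := by
  simp only [sortFn, List.sum_range_getD]
  rw [List.take_of_length_le (by rwa [Multiset.length_sort]), ← Multiset.sum_coe,
    Multiset.sort_eq]

theorem eq_of_sortFn_eq (hM : 0 ∉ M) (hM' : 0 ∉ M') (h : sortFn M = sortFn M') : M = M' := by
  rw [← Multiset.sort_eq M (· ≥ ·), ← Multiset.sort_eq M' (· ≥ ·),
    List.eq_of_getD_eq_of_zero_notMem (by simpa) (by simpa) (congrFun h)]

end SortFn

theorem Dominates.antisymm {f g : ℕ → ℕ} (hfg : Dominates f g) (hgf : Dominates g f) :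
    f = g := by
  funext k
  have hk := le_antisymm (hgf k) (hfg k)
  have hk₁ := le_antisymm (hgf (k + 1)) (hfg (k + 1))
  rw [sum_range_succ, sum_range_succ] at hk₁
  omega

theorem dominates_of_staircase_le {f g : ℕ → ℕ} {c N : ℕ} (hf : Antitone f)
    (hfc : ∀ i, c - i ≤ f i) (hg : ∀ i, g i ≤ max (c - i) 1)
    (hsum : ∀ k, ∑ i ∈ range k, g i ≤ ∑ i ∈ range N, f i) : Dominates f g := by
  intro k
  by_cases htail : ∃ j, k ≤ j ∧ 0 < f j
  · obtain ⟨j, hkj, hj⟩ := htail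
    refine sum_le_sum fun i hi => (hg i).trans (max_le (hfc i) ?_)
    exact hj.trans_le (hf (by rw [mem_range] at hi; omega))
  · simp only [not_exists, not_and, not_lt] at htail
    calc ∑ i ∈ range k, g i ≤ ∑ i ∈ range N, f i := hsum k
      _ ≤ ∑ i ∈ range (max N k), f i :=
        sum_le_sum_of_subset (range_subset_range.2 (le_max_left _ _))
      _ = ∑ i ∈ range k, f i := by
        refine (sum_subset (range_subset_range.2 (le_max_right _ _)) fun j _ hj => ?_).symm
        rw [mem_range, not_lt] at hj
        exact Nat.eq_zero_of_le_zero (htail j hj)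

theorem StrictAnti.fin_add_sub_le {m : ℕ} {a : Fin m → ℕ} (ha : StrictAnti a) {i j : Fin m}
    (hij : i ≤ j) : a j + (j - i : ℕ) ≤ a i := by
  suffices ∀ d (j : Fin m), (j : ℕ) = i + d → a j + d ≤ a i by
    exact this _ j (by rw [Fin.le_def] at hij; omega)
  intro d
  induction d with
  | zero => intro j hj; rw [show j = i from Fin.ext hj]; omega
  | succ d ih =>
    intro j hj
    have hprev := ih ⟨i + d, by omega⟩ rfl
    have hstep : a j < a ⟨i + d, by omega⟩ := ha (by rw [Fin.lt_def]; simp only; omega)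
    omega

theorem StrictAnti.fin_sub_le {m : ℕ} {a : Fin m → ℕ} (ha : StrictAnti a) (i : Fin m) :
    m - 1 - i ≤ a i := by
  have hi := i.isLt
  have := ha.fin_add_sub_le (i := i) (j := ⟨m - 1, by omega⟩) (Fin.le_def.2 (by simp only; omega))
  simp only at this
  omega

theorem StrictAnti.fin_eq_sub_of_lt {m : ℕ} {a : Fin m → ℕ} (ha : StrictAnti a)
    (hlt : ∀ i, a i < m) (i : Fin m) : a i = m - 1 - i := by
  have := ha.fin_add_sub_le (i := ⟨0, i.pos⟩) (j := i) (by rw [Fin.le_def]; simp only; omega)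
  have := ha.fin_sub_le i
  have := hlt ⟨0, i.pos⟩
  simp only at *
  omega

namespace SuperPartition

variable {m : ℕ}

theorem ext {Λ Ω : SuperPartition m} (ha : Λ.a = Ω.a) (hs : Λ.s = Ω.s) : Λ = Ω := by
  cases Λ; cases Ω
  cases ha; cases hs
  rfl

theorem strictAnti_a (Λ : SuperPartition m) : StrictAnti Λ.a := fun _ _ h => Λ.a_strictAnti h

def starMultiset (Λ : SuperPartition m) : Multiset ℕ :=
  (List.ofFn Λ.a : Multiset ℕ) + (Λ.s : Multiset ℕ)

def circMultiset (Λ : SuperPartition m) : Multiset ℕ :=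
  (List.ofFn (fun i => Λ.a i + 1) : Multiset ℕ) + (Λ.s : Multiset ℕ)

theorem starFn_eq (Λ : SuperPartition m) : Λ.starFn = sortFn Λ.starMultiset := rfl

theorem circFn_eq (Λ : SuperPartition m) : Λ.circFn = sortFn Λ.circMultiset := rfl

theorem card_starMultiset (Λ : SuperPartition m) : Λ.starMultiset.card = m + Λ.s.length := by
  simp [starMultiset]

theorem card_circMultiset (Λ : SuperPartition m) : Λ.circMultiset.card = m + Λ.s.length := by
  simp [circMultiset]

theorem sum_starMultiset (Λ : SuperPartition m) : Λ.starMultiset.sum = Λ.deg := by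
  simp [starMultiset, deg, List.sum_ofFn]

theorem sum_circMultiset (Λ : SuperPartition m) : Λ.circMultiset.sum = Λ.deg + m := by
  simp [circMultiset, deg, List.sum_ofFn, sum_add_distrib]
  ring

theorem zero_notMem_circMultiset (Λ : SuperPartition m) : 0 ∉ Λ.circMultiset := by
  simp only [circMultiset, Multiset.mem_add, Multiset.mem_coe, List.mem_ofFn, not_or]
  exact ⟨fun ⟨i, hi⟩ => by omega, fun h => (Λ.s_pos 0 h).false⟩

theorem add_one_mem_circMultiset (Λ : SuperPartition m) (i : Fin m) :
    Λ.a i + 1 ∈ Λ.circMultiset := by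
  simp [circMultiset]

theorem sortFn_ofFn (Λ : SuperPartition m) {b : ℕ} (i : Fin m) :
    sortFn (List.ofFn fun j => Λ.a j + b) i = Λ.a i + b := by
  rw [sortFn_coe_of_pairwise (List.pairwise_ofFn.2 fun _ _ h => by
    have := Λ.strictAnti_a h; simp only [ge_iff_le]; omega)]
  simp

theorem sub_le_starFn (Λ : SuperPartition m) (i : ℕ) : m - 1 - i ≤ Λ.starFn i := by
  by_cases hi : i < m
  · calc m - 1 - i ≤ Λ.a ⟨i, hi⟩ := Λ.strictAnti_a.fin_sub_le ⟨i, hi⟩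
      _ = sortFn (List.ofFn Λ.a) i := by simpa using (Λ.sortFn_ofFn (b := 0) ⟨i, hi⟩).symm
      _ ≤ Λ.starFn i := sortFn_mono (Multiset.le_add_right _ _) i
  · omega

theorem sub_le_circFn (Λ : SuperPartition m) (i : ℕ) : m - i ≤ Λ.circFn i := by
  by_cases hi : i < m
  · calc m - i ≤ Λ.a ⟨i, hi⟩ + 1 := by
          have := Λ.strictAnti_a.fin_sub_le ⟨i, hi⟩
          simp only at this
          omega
      _ = sortFn (List.ofFn fun j => Λ.a j + 1) i := (Λ.sortFn_ofFn ⟨i, hi⟩).symm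
      _ ≤ Λ.circFn i := sortFn_mono (Multiset.le_add_right _ _) i
  · omega

end SuperPartition

section LambdaMin

variable {m nh : ℕ}

theorem deg_LambdaMin : (LambdaMin m nh).deg = m * (m - 1) / 2 + nh := by
  have hstair : ∑ i : Fin m, (m - 1 - (i : ℕ)) = m * (m - 1) / 2 := by
    rw [Fin.sum_univ_eq_sum_range (fun i => m - 1 - i), ← sum_range_id]
    exact sum_range_reflect id m
  simp [SuperPartition.deg, LambdaMin, hstair]

theorem circMultiset_LambdaMin :
    (LambdaMin m nh).circMultiset = ↑(List.ofFn (fun i : Fin m => m - i) ++ .replicate nh 1) := by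
  rw [SuperPartition.circMultiset, ← Multiset.coe_add]
  congr 2
  exact List.ofFn_inj.2 (funext fun i => by simp only [LambdaMin]; omega)

theorem circFn_LambdaMin_le (i : ℕ) : (LambdaMin m nh).circFn i ≤ max (m - i) 1 := by
  have hsorted : (List.ofFn (fun i : Fin m => m - i) ++ .replicate nh 1).Pairwise (· ≥ ·) := by
    simp only [List.pairwise_append, List.pairwise_ofFn, List.pairwise_replicate, List.mem_ofFn,
      List.mem_replicate]
    refine ⟨fun i j h => ?_, by simp, ?_⟩
    · simp only [Fin.lt_def] at h; omega
    · rintro _ ⟨i, rfl⟩ _ ⟨-, rfl⟩; omega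
  rw [SuperPartition.circFn_eq, circMultiset_LambdaMin, sortFn_coe_of_pairwise hsorted]
  dsimp only
  by_cases hi : i < m
  · rw [List.getD_append _ _ _ _ (by simpa)]; simp [hi]
  · rw [List.getD_append_right _ _ _ _ (by simp; omega)]
    simp only [List.getD_eq_getElem?_getD, List.getElem?_replicate]
    split <;> simp

theorem starFn_LambdaMin : (LambdaMin m nh).starFn = (LambdaMin (m - 1) nh).circFn := by
  rw [SuperPartition.starFn_eq, SuperPartition.circFn_eq]
  cases m with
  | zero => rfl
  | succ m =>
    rw [Nat.add_sub_cancel, ← sortFn_zero_cons (LambdaMin m nh).circMultiset]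
    congr 1
    have hinit : (List.ofFn fun i : Fin m => (LambdaMin (m + 1) nh).a i.castSucc) =
        List.ofFn fun i => (LambdaMin m nh).a i + 1 :=
      List.ofFn_inj.2 (funext fun i => by simp only [LambdaMin, Fin.val_castSucc]; omega)
    have hlast : (LambdaMin (m + 1) nh).a (Fin.last m) = 0 := by simp [LambdaMin]
    rw [SuperPartition.starMultiset, SuperPartition.circMultiset, List.ofFn_succ',
      List.concat_eq_append, hinit, hlast]
    simp only [← Multiset.coe_add, ← Multiset.singleton_add, Multiset.coe_singleton]
    abel

end LambdaMin

namespace SuperPartition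

variable {m nh : ℕ} (Λ : SuperPartition m)

theorem dominates_starFn_LambdaMin (h : Λ.deg = (LambdaMin m nh).deg) :
    Dominates Λ.starFn (LambdaMin m nh).starFn := by
  refine dominates_of_staircase_le (N := m + Λ.s.length) (sortFn_antitone _) Λ.sub_le_starFn
    (fun i => starFn_LambdaMin ▸ circFn_LambdaMin_le i) fun k => ?_
  calc ∑ i ∈ range k, (LambdaMin m nh).starFn i ≤ (LambdaMin m nh).starMultiset.sum :=
        sum_range_sortFn_le _ k
    _ = ∑ i ∈ range (m + Λ.s.length), Λ.starFn i := by
      rw [starFn_eq, sum_range_sortFn_of_card_le Λ.card_starMultiset.le, sum_starMultiset,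
        sum_starMultiset, h]

theorem dominates_circFn_LambdaMin (h : Λ.deg = (LambdaMin m nh).deg) :
    Dominates Λ.circFn (LambdaMin m nh).circFn := by
  refine dominates_of_staircase_le (N := m + Λ.s.length) (sortFn_antitone _) Λ.sub_le_circFn
    circFn_LambdaMin_le fun k => ?_
  calc ∑ i ∈ range k, (LambdaMin m nh).circFn i ≤ (LambdaMin m nh).circMultiset.sum :=
        sum_range_sortFn_le _ k
    _ = ∑ i ∈ range (m + Λ.s.length), Λ.circFn i := by
      rw [circFn_eq, sum_range_sortFn_of_card_le Λ.card_circMultiset.le, sum_circMultiset,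
        sum_circMultiset, h]

theorem eq_LambdaMin_of_circFn_eq (h : Λ.circFn = (LambdaMin m nh).circFn) :
    Λ = LambdaMin m nh := by
  have ha : Λ.a = (LambdaMin m nh).a := by
    refine funext (Λ.strictAnti_a.fin_eq_sub_of_lt fun i => ?_)
    have hbound := calc Λ.a i + 1 ≤ Λ.circFn 0 := le_sortFn_zero_of_mem (Λ.add_one_mem_circMultiset i)
      _ = (LambdaMin m nh).circFn 0 := congrFun h 0
      _ ≤ max (m - 0) 1 := circFn_LambdaMin_le 0
    have := i.pos
    omega
  have hs : (Λ.s : Multiset ℕ) = (LambdaMin m nh).s := by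
    have := eq_of_sortFn_eq Λ.zero_notMem_circMultiset (LambdaMin m nh).zero_notMem_circMultiset h
    rwa [circMultiset, circMultiset, ha, add_right_inj] at this
  exact ext ha (List.Perm.eq_of_pairwise' Λ.s_sorted (LambdaMin m nh).s_sorted
    (Multiset.coe_eq_coe.1 hs))

end SuperPartition

/-- for `n ≥ m(m-1)/2`, `Λ_min = (m-1,…,1,0 ; 1^{n̂})` with
`n̂ = n - m(m-1)/2` is the unique minimum of the superpartitions of degree `(n|m)`
under dominance: every such `Λ` satisfies `Λ ≥ Λ_min`. -/
theorem stmt4 (m n : ℕ) (hn : m * (m - 1) / 2 ≤ n) :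
    (LambdaMin m (n - m * (m - 1) / 2)).deg = n ∧
    (∀ Λ : SuperPartition m, Λ.deg = n →
      SuperDom Λ (LambdaMin m (n - m * (m - 1) / 2))) ∧
    (∀ Ω : SuperPartition m, Ω.deg = n →
      (∀ Λ : SuperPartition m, Λ.deg = n → SuperDom Λ Ω) →
      Ω = LambdaMin m (n - m * (m - 1) / 2)) := by
  have hdeg : (LambdaMin m (n - m * (m - 1) / 2)).deg = n := by
    rw [deg_LambdaMin]
    omega
  have hmin (Λ : SuperPartition m) (hΛ : Λ.deg = n) :
      SuperDom Λ (LambdaMin m (n - m * (m - 1) / 2)) :=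
    ⟨hΛ.trans hdeg.symm, Λ.dominates_starFn_LambdaMin (hΛ.trans hdeg.symm),
      Λ.dominates_circFn_LambdaMin (hΛ.trans hdeg.symm)⟩
  refine ⟨hdeg, hmin, fun Ω hΩ hdom => Ω.eq_LambdaMin_of_circFn_eq ?_⟩
  exact (hmin Ω hΩ).2.2.antisymm (hdom _ hdeg).2.2
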